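/- Let V be a complex Banach space with the Bohl–Bohr property, let a : ℝ → ℝ be bounded, continuous and almost automorphic such that t ↦ ∫_0^t a(s) ds is bounded on ℝ, and let f : ℝ → V be bounded, continuous and almost automorphic. Then every bounded differentiable solution y of y'(t) = i·a(t)·y(t) + f(t) on ℝ is almost automorphic, and it satisfies y(t) = exp(i·∫_0^t a(r) dr)·y(0) + ∫_0^t exp(i·∫_s^t a(r) dr)·f(s) ds for all t ∈ ℝ. -/

import Mathlib

open MeasureTheory Filter Topology

/-- A continuous function `ψ : ℝ → V` into a Banach space is almost automorphic if for every
sequence of reals there is a subsequence `(τₙ)` and a function `ψ̃` with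
`ψ(t+τₙ) → ψ̃(t)` and `ψ̃(t−τₙ) → ψ(t)` pointwise on `ℝ`. -/
def AlmostAutomorphic {V : Type*} [NormedAddCommGroup V] (ψ : ℝ → V) : Prop :=
  Continuous ψ ∧ ∀ σ : ℕ → ℝ, ∃ k : ℕ → ℕ, StrictMono k ∧ ∃ ψt : ℝ → V,
    (∀ t : ℝ, Tendsto (fun n => ψ (t + σ (k n))) atTop (𝓝 (ψt t))) ∧
    (∀ t : ℝ, Tendsto (fun n => ψt (t - σ (k n))) atTop (𝓝 (ψ t)))

/-- A Banach space `V` has the Bohl–Bohr property if every bounded primitive of an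
almost automorphic function `ℝ → V` is almost automorphic. -/
def BohlBohrSpace (V : Type*) [NormedAddCommGroup V] [NormedSpace ℂ V] : Prop :=
  ∀ f : ℝ → V, AlmostAutomorphic f →
    (∃ C, ∀ t : ℝ, ‖∫ s in (0 : ℝ)..t, f s‖ ≤ C) →
    AlmostAutomorphic (fun t => ∫ s in (0 : ℝ)..t, f s)

/-!
With `A t = ∫₀ᵗ a`, the integrating factor `exp (-i A)` turns the equation into
`(exp (-i A) • y)' = exp (-i A) • f`, which gives the variation-of-constants formula.
Applying the Bohl–Bohr property to `t ↦ a t • v` for a fixed `v ≠ 0`, and reading the result back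
through a functional `ℓ` with `ℓ v = 1`, shows that `A` is almost automorphic, hence so are
`exp (± i A)` and `exp (-i A) • f`. As `‖exp (-i A t)‖ = 1`, the primitive
`∫₀ᵗ exp (-i A) • f = exp (-i A t) • y t - y 0` is bounded, hence almost automorphic, and so is
`y t = exp (i A t) • (y 0 + ∫₀ᵗ exp (-i A) • f)`.
-/

section AlmostAutomorphic

variable {V W : Type*} [NormedAddCommGroup V] [NormedAddCommGroup W] {ψ : ℝ → V} {φ : ℝ → W}

theorem AlmostAutomorphic.comp {F : V → W} (hF : Continuous F) (h : AlmostAutomorphic ψ) :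
    AlmostAutomorphic (fun t => F (ψ t)) := by
  refine ⟨hF.comp h.1, fun σ => ?_⟩
  obtain ⟨k, hk, ψt, hψ₁, hψ₂⟩ := h.2 σ
  exact ⟨k, hk, fun t => F (ψt t),
    fun t => (hF.tendsto _).comp (hψ₁ t), fun t => (hF.tendsto _).comp (hψ₂ t)⟩

theorem AlmostAutomorphic.prodMk (hψ : AlmostAutomorphic ψ) (hφ : AlmostAutomorphic φ) :
    AlmostAutomorphic (fun t => (ψ t, φ t)) := by
  refine ⟨hψ.1.prodMk hφ.1, fun σ => ?_⟩
  obtain ⟨k₁, hk₁, ψt, hψ₁, hψ₂⟩ := hψ.2 σ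
  obtain ⟨k₂, hk₂, φt, hφ₁, hφ₂⟩ := hφ.2 (σ ∘ k₁)
  refine ⟨k₁ ∘ k₂, hk₁.comp hk₂, fun t => (ψt t, φt t), fun t => ?_, fun t => ?_⟩
  · exact ((hψ₁ t).comp hk₂.tendsto_atTop).prodMk_nhds (hφ₁ t)
  · exact ((hψ₂ t).comp hk₂.tendsto_atTop).prodMk_nhds (hφ₂ t)

theorem AlmostAutomorphic.smul {𝕜 : Type*} [NormedField 𝕜] [NormedSpace 𝕜 V] {c : ℝ → 𝕜}
    (hc : AlmostAutomorphic c) (hψ : AlmostAutomorphic ψ) :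
    AlmostAutomorphic (fun t => c t • ψ t) :=
  (hc.prodMk hψ).comp continuous_smul

theorem AlmostAutomorphic.of_subsingleton [Subsingleton V] (ψ : ℝ → V) : AlmostAutomorphic ψ :=
  ⟨continuous_of_const fun _ _ => Subsingleton.elim _ _, fun _ =>
    ⟨id, strictMono_id, ψ, fun _ => tendsto_const_nhds.congr fun _ => Subsingleton.elim _ _,
      fun _ => tendsto_const_nhds.congr fun _ => Subsingleton.elim _ _⟩⟩

end AlmostAutomorphic

theorem BohlBohrSpace.almostAutomorphic_real_primitive {V : Type*} [NormedAddCommGroup V]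
    [NormedSpace ℂ V] [CompleteSpace V] [Nontrivial V] (hV : BohlBohrSpace V) {a : ℝ → ℝ}
    (ha : AlmostAutomorphic a) (hA : ∃ C, ∀ t : ℝ, |∫ s in (0 : ℝ)..t, a s| ≤ C) :
    AlmostAutomorphic (fun t => ∫ s in (0 : ℝ)..t, a s) := by
  obtain ⟨v, hv⟩ := exists_ne (0 : V)
  obtain ⟨ℓ, hℓ⟩ : ∃ ℓ : StrongDual ℝ V, ℓ v = 1 := SeparatingDual.exists_eq_one hv
  obtain ⟨C, hC⟩ := hA
  have hprim : AlmostAutomorphic (fun t => ∫ s in (0 : ℝ)..t, a s • v) := by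
    refine hV _ (ha.comp (continuous_id.smul continuous_const)) ⟨C * ‖v‖, fun t => ?_⟩
    rw [intervalIntegral.integral_smul_const, norm_smul, Real.norm_eq_abs]
    exact mul_le_mul_of_nonneg_right (hC t) (norm_nonneg v)
  simpa [intervalIntegral.integral_smul_const, hℓ] using hprim.comp ℓ.continuous

section VariationOfConstants

variable {V : Type*} [NormedAddCommGroup V] [NormedSpace ℂ V] {φ φ' : ℝ → ℂ} {y f : ℝ → V}

theorem hasDerivAt_exp_neg_smul {t : ℝ} (hφ : HasDerivAt φ (φ' t) t)
    (hy : HasDerivAt y (φ' t • y t + f t) t) :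
    HasDerivAt (fun s => Complex.exp (-φ s) • y s) (Complex.exp (-φ t) • f t) t := by
  convert hφ.fun_neg.cexp.fun_smul hy using 1
  rw [smul_add, smul_smul, add_comm, ← add_assoc, ← add_smul, mul_neg, neg_add_cancel,
    zero_smul, zero_add]

variable [CompleteSpace V]

theorem integral_exp_neg_smul_eq_sub (hφ : ∀ t, HasDerivAt φ (φ' t) t)
    (hy : ∀ t, HasDerivAt y (φ' t • y t + f t) t) (hf : Continuous f) (a b : ℝ) :
    ∫ s in a..b, Complex.exp (-φ s) • f s =
      Complex.exp (-φ b) • y b - Complex.exp (-φ a) • y a := by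
  have hφc : Continuous φ := continuous_iff_continuousAt.2 fun t => (hφ t).continuousAt
  exact intervalIntegral.integral_eq_sub_of_hasDerivAt
    (fun t _ => hasDerivAt_exp_neg_smul (hφ t) (hy t))
    ((Complex.continuous_exp.comp hφc.neg).smul hf |>.intervalIntegrable a b)

theorem eq_exp_smul_add_integral (hφ : ∀ t, HasDerivAt φ (φ' t) t)
    (hy : ∀ t, HasDerivAt y (φ' t • y t + f t) t) (hf : Continuous f) (t₀ t : ℝ) :
    y t = Complex.exp (φ t) •
      (Complex.exp (-φ t₀) • y t₀ + ∫ s in t₀..t, Complex.exp (-φ s) • f s) := by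
  rw [integral_exp_neg_smul_eq_sub hφ hy hf, add_sub_cancel, smul_smul, ← Complex.exp_add,
    add_neg_cancel, Complex.exp_zero, one_smul]

theorem eq_exp_sub_smul_add_integral (hφ : ∀ t, HasDerivAt φ (φ' t) t)
    (hy : ∀ t, HasDerivAt y (φ' t • y t + f t) t) (hf : Continuous f) (t₀ t : ℝ) :
    y t = Complex.exp (φ t - φ t₀) • y t₀ +
      ∫ s in t₀..t, Complex.exp (φ t - φ s) • f s := by
  conv_lhs => rw [eq_exp_smul_add_integral hφ hy hf t₀ t]
  simp_rw [smul_add, ← intervalIntegral.integral_smul, smul_smul, ← Complex.exp_add,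
    ← sub_eq_add_neg]

end VariationOfConstants

theorem BohlBohrSpace.almostAutomorphic_of_hasDerivAt_I_mul {V : Type*} [NormedAddCommGroup V]
    [NormedSpace ℂ V] [CompleteSpace V] (hV : BohlBohrSpace V) {θ θ' : ℝ → ℝ}
    (hθ : ∀ t, HasDerivAt θ (θ' t) t) (hθaa : AlmostAutomorphic θ) {f y : ℝ → V}
    (hf : AlmostAutomorphic f) (hy : ∀ t, HasDerivAt y ((Complex.I * θ' t) • y t + f t) t)
    (hyb : ∃ C, ∀ t, ‖y t‖ ≤ C) : AlmostAutomorphic y := by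
  have hφ : ∀ t, HasDerivAt (fun t => Complex.I * θ t) (Complex.I * θ' t) t := fun t =>
    (hθ t).ofReal_comp.const_mul _
  have hE : AlmostAutomorphic (fun t => Complex.exp (Complex.I * θ t)) :=
    hθaa.comp (F := fun x : ℝ => Complex.exp (Complex.I * x)) (by fun_prop)
  have hE' : AlmostAutomorphic (fun t => Complex.exp (-(Complex.I * θ t))) :=
    hθaa.comp (F := fun x : ℝ => Complex.exp (-(Complex.I * x))) (by fun_prop)
  obtain ⟨C, hC⟩ := hyb
  have hG := hV _ (hE'.smul hf) ⟨C + ‖y 0‖, fun t => ?_⟩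
  · rw [funext (eq_exp_smul_add_integral hφ hy hf.1 0)]
    exact hE.smul (hG.comp (continuous_const_add _))
  · rw [integral_exp_neg_smul_eq_sub hφ hy hf.1]
    refine (norm_sub_le _ _).trans ?_
    simpa [norm_smul, Complex.norm_exp] using hC t

theorem massera_scalar_imaginary_coefficient
    {V : Type*} [NormedAddCommGroup V] [NormedSpace ℂ V] [CompleteSpace V]
    (hV : BohlBohrSpace V)
    (a : ℝ → ℝ)
    (haaa : AlmostAutomorphic a)
    (haprim : ∃ C, ∀ t : ℝ, |∫ s in (0 : ℝ)..t, a s| ≤ C)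
    (f : ℝ → V)
    (hfaa : AlmostAutomorphic f)
    (y : ℝ → V)
    (hy : ∀ t : ℝ, HasDerivAt y ((Complex.I * (a t : ℂ)) • y t + f t) t)
    (hyb : ∃ C, ∀ t : ℝ, ‖y t‖ ≤ C) :
    AlmostAutomorphic y ∧
    ∀ t : ℝ, y t = Complex.exp (Complex.I * ((∫ r in (0 : ℝ)..t, a r : ℝ) : ℂ)) • y 0 +
      ∫ s in (0 : ℝ)..t, Complex.exp (Complex.I * ((∫ r in s..t, a r : ℝ) : ℂ)) • f s := by
  set A : ℝ → ℝ := fun t => ∫ s in (0 : ℝ)..t, a s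
  have hA : ∀ t, HasDerivAt A (a t) t := fun t =>
    (haaa.1.integral_hasStrictDerivAt 0 t).hasDerivAt
  refine ⟨?_, fun t => ?_⟩
  · rcases subsingleton_or_nontrivial V with _ | _
    · exact .of_subsingleton y
    exact hV.almostAutomorphic_of_hasDerivAt_I_mul hA
      (hV.almostAutomorphic_real_primitive haaa haprim) hfaa hy hyb
  · have hφ : ∀ t, HasDerivAt (fun t => Complex.I * A t) (Complex.I * a t) t := fun t =>
      (hA t).ofReal_comp.const_mul _
    have hsub : ∀ s,
        Complex.I * ((∫ r in s..t, a r : ℝ) : ℂ) = Complex.I * A t - Complex.I * A s := fun s => by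
        rw [← mul_sub, ← Complex.ofReal_sub, intervalIntegral.integral_interval_sub_left
          (haaa.1.intervalIntegrable 0 t) (haaa.1.intervalIntegrable 0 s)]
    simp_rw [hsub]
    exact eq_exp_sub_smul_add_integral hφ hy hfaa.1 0 t
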